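/- Composition of tree-expanded series distributes over the over and under products in the right-module sense: (A / D)∘C = (A∘C) / (D∘C) and (A ∖ D)∘C = (A∘C) ∖ (D∘C). -/

import Mathlib

/-- Planar binary trees: a leaf, or an internal vertex with two subtrees. -/
inductive PBT : Type
  | leaf : PBT
  | node : PBT → PBT → PBT
  deriving DecidableEq

namespace PBT

/-- Number of internal vertices of a planar binary tree. -/
def size : PBT → ℕ
  | leaf => 0
  | node l r => size l + size r + 1

/-- `under u v` ("u ∖ v") grafts `v` at the rightmost leaf of `u`. -/
def under : PBT → PBT → PBT
  | leaf, v => v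
  | node l r, v => node l (under r v)

/-- `over u v` ("u / v") grafts `u` at the leftmost leaf of `v`. -/
def over' (u : PBT) : PBT → PBT
  | leaf => u
  | node l r => node (over' u l) r

/-- Number of internal vertices on the rightmost path (right spine). -/
def rightSpine : PBT → ℕ
  | leaf => 0
  | node _ r => rightSpine r + 1

/-- The left comb with `p` internal vertices. -/
def leftComb : ℕ → PBT
  | 0 => leaf
  | p + 1 => node (leftComb p) leaf

/-- The right comb with `q` internal vertices. -/
def rightComb : ℕ → PBT
  | 0 => leaf
  | q + 1 => node leaf (rightComb q)

/-- The list of all factorizations `t = u ∖ v` (each exactly once). -/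
def underFactors : PBT → List (PBT × PBT)
  | leaf => [(leaf, leaf)]
  | node l r => (leaf, node l r) :: (underFactors r).map (fun p => (node l p.1, p.2))

/-- The list of all factorizations `t = u / v` (each exactly once). -/
def overFactors : PBT → List (PBT × PBT)
  | leaf => [(leaf, leaf)]
  | node l r => (node l r, leaf) :: (overFactors l).map (fun p => (p.1, node p.2 r))

/-- Convolution of tree-expanded series dual to the over product:
`(A / B)_w = Σ_{s / t = w} A_s B_t`. -/
def overConv {R : Type*} [CommRing R] (f g : PBT → R) (w : PBT) : R :=
  ((overFactors w).map (fun p => f p.1 * g p.2)).sum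

/-- Convolution of tree-expanded series dual to the under product:
`(A ∖ B)_w = Σ_{s ∖ t = w} A_s B_t`. -/
def underConv {R : Type*} [CommRing R] (f g : PBT → R) (w : PBT) : R :=
  ((underFactors w).map (fun p => f p.1 * g p.2)).sum

/-- The list of all planar binary trees with `n` internal vertices. -/
def treesOfSize : ℕ → List PBT
  | 0 => [leaf]
  | n + 1 =>
    (List.range (n + 1)).attach.flatMap (fun i =>
      (treesOfSize i.1).flatMap (fun l =>
        (treesOfSize (n - i.1)).map (fun r => node l r)))
  termination_by n => n
  decreasing_by
  · exact Nat.lt_succ_of_le (Nat.sub_le _ _)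
  · exact List.mem_range.mp i.2

/-- `treePow B t` is the series `B^t = μ_t(B,…,B)`, the substitution of the
series `B` in all internal vertices of `t` (duplicial operad composition),
using the decomposition `l ∨ r = (l / Y) ∖ r`. -/
def treePow {R : Type*} [CommRing R] (B : PBT → R) : PBT → PBT → R
  | leaf => fun w => if w = leaf then 1 else 0
  | node l r => underConv (overConv (treePow B l) B) (treePow B r)

/-- Composition of tree-expanded series: `(A ∘ B)_w = Σ_t A_t (B^t)_w`,
where only trees with at most `|w|` vertices can contribute. -/
def comp {R : Type*} [CommRing R] (A B : PBT → R) (w : PBT) : R :=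
  (((List.range (size w + 1)).flatMap treesOfSize).map
    (fun t => A t * treePow B t w)).sum

/-- The series reduced to the one-vertex tree `Y`. -/
def Yser {R : Type*} [CommRing R] : PBT → R :=
  fun t => if t = node leaf leaf then 1 else 0

/-- The series reduced to the root tree `|` (unit for the over/under products). -/
def unitSer {R : Type*} [CommRing R] : PBT → R :=
  fun t => if t = leaf then 1 else 0

/-- Suspension of a tree-expanded series: the coefficient on a tree with `n`
internal vertices is multiplied by `(-1)^(n-1)`. -/
def susp {R : Type*} [CommRing R] (A : PBT → R) : PBT → R :=
  fun t => (-1 : R) ^ (size t + 1) * A t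

/-- One covering step of the Tamari order: a right rotation
`(a ∨ b) ∨ c ⟶ a ∨ (b ∨ c)` somewhere in the tree. -/
inductive TamariStep : PBT → PBT → Prop
  | rot (a b c : PBT) : TamariStep (node (node a b) c) (node a (node b c))
  | left {l l' : PBT} (r : PBT) : TamariStep l l' → TamariStep (node l r) (node l' r)
  | right (l : PBT) {r r' : PBT} : TamariStep r r' → TamariStep (node l r) (node l r')

/-- The Tamari partial order on planar binary trees. -/
def tle : PBT → PBT → Prop := Relation.ReflTransGen TamariStep

end PBT

/-!
Write `(A ∘ C)_w = Σ_t A_t (C^t)_w`. Since `C` has no constant term, `C^t` vanishes on trees with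
fewer than `|t|` internal vertices, so all these sums may be taken over the trees with at most `|w|`
vertices. Associativity of `/` and `∖`, together with the exchange law `(f / g) ∖ h = f / (g ∖ h)`
for `g` without constant term, make `t ↦ C^t` send grafting to convolution:
`C^(s / t) = C^s / C^t` and `C^(s ∖ t) = C^s ∖ C^t`. Both sides of each distributivity law then
expand to the same double sum `Σ_{s,t} A_s D_t (C^(s ⋆ t))_w`, where `⋆` is `/` resp. `∖`.
-/

namespace PBT

variable {R : Type*} [CommRing R]

lemma size_over (u v : PBT) : size (over' u v) = size u + size v := by
  induction v with
  | leaf => rfl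
  | node l r ihl _ => simp only [over', size, ihl]; omega

lemma size_under (u v : PBT) : size (under u v) = size u + size v := by
  induction u with
  | leaf => simp [under, size]
  | node l r _ ihr => simp only [under, size, ihr]; omega

lemma size_eq_zero {t : PBT} : size t = 0 ↔ t = leaf := by
  cases t <;> simp [size]

lemma mem_overFactors {t : PBT} {p : PBT × PBT} : p ∈ overFactors t ↔ over' p.1 p.2 = t := by
  induction t generalizing p with
  | leaf => obtain ⟨_ | _, _ | _⟩ := p <;> simp [overFactors, over']
  | node l r ihl _ =>
    obtain ⟨x, _ | ⟨a, b⟩⟩ := p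
    · simp [overFactors, over']
    · simp [overFactors, over', ihl, and_comm, eq_comm]

lemma mem_underFactors {t : PBT} {p : PBT × PBT} : p ∈ underFactors t ↔ under p.1 p.2 = t := by
  induction t generalizing p with
  | leaf => obtain ⟨_ | _, _ | _⟩ := p <;> simp [underFactors, under]
  | node l r _ ihr =>
    obtain ⟨_ | ⟨a, b⟩, y⟩ := p
    · simp [underFactors, under]
    · simp [underFactors, under, ihr, and_comm, eq_comm]

lemma nodup_overFactors (t : PBT) : (overFactors t).Nodup := by
  induction t with
  | leaf => simp [overFactors]
  | node l r ihl _ =>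
    refine List.nodup_cons.2 ⟨by simp, ihl.map fun p q h => ?_⟩
    simp_all [Prod.ext_iff]

lemma nodup_underFactors (t : PBT) : (underFactors t).Nodup := by
  induction t with
  | leaf => simp [underFactors]
  | node l r _ ihr =>
    refine List.nodup_cons.2 ⟨by simp, ihr.map fun p q h => ?_⟩
    simp_all [Prod.ext_iff]

lemma mem_treesOfSize {n : ℕ} {t : PBT} : t ∈ treesOfSize n ↔ size t = n := by
  induction n using Nat.strong_induction_on generalizing t with
  | _ n ih =>
    cases n with
    | zero => simp [treesOfSize, size_eq_zero]
    | succ m =>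
      rw [treesOfSize]
      cases t with
      | leaf => simp [size]
      | node l r =>
        simp only [List.mem_flatMap, List.mem_attach, List.mem_map, true_and, Subtype.exists,
          List.mem_range, size, Nat.add_right_cancel_iff, node.injEq]
        constructor
        · rintro ⟨i, hi, l', hl', r', hr', rfl, rfl⟩
          rw [ih i (by omega) |>.1 hl', ih (m - i) (by omega) |>.1 hr']
          omega
        · rintro rfl
          exact ⟨size l, by omega, l, (ih _ (by omega)).2 rfl, r,
            (ih _ (by omega)).2 (by omega), rfl, rfl⟩

lemma nodup_treesOfSize (n : ℕ) : (treesOfSize n).Nodup := by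
  induction n using Nat.strong_induction_on with
  | _ n ih =>
    cases n with
    | zero => simp [treesOfSize]
    | succ m =>
      rw [treesOfSize]
      refine List.nodup_flatMap.2 ⟨fun i _ => ?_, ?_⟩
      · have hi := List.mem_range.1 i.2
        refine List.nodup_flatMap.2 ⟨fun l _ => (ih _ (by omega)).map fun _ _ h => ?_, ?_⟩
        · exact (node.inj h).2
        · refine (ih _ hi).imp fun hne t ht ht' => hne ?_
          simp only [List.mem_map] at ht ht'
          obtain ⟨_, _, rfl⟩ := ht
          obtain ⟨_, _, h⟩ := ht'
          exact (node.inj h).1.symm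
      · refine (List.nodup_attach.2 List.nodup_range).imp fun hne _ ht ht' => hne ?_
        simp only [List.mem_flatMap, List.mem_map] at ht ht'
        obtain ⟨l, hl, _, _, rfl⟩ := ht
        obtain ⟨l', hl', _, _, h⟩ := ht'
        rw [(node.inj h).1] at hl'
        exact Subtype.ext ((mem_treesOfSize.1 hl).symm.trans (mem_treesOfSize.1 hl'))

lemma nodup_flatMap_treesOfSize (n : ℕ) : ((List.range n).flatMap treesOfSize).Nodup :=
  List.nodup_flatMap.2 ⟨fun i _ => nodup_treesOfSize i, List.nodup_range.imp
    fun hne _ ht ht' => hne ((mem_treesOfSize.1 ht).symm.trans (mem_treesOfSize.1 ht'))⟩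

def treesUpTo (n : ℕ) : Finset PBT := ((List.range (n + 1)).flatMap treesOfSize).toFinset

lemma mem_treesUpTo {n : ℕ} {t : PBT} : t ∈ treesUpTo n ↔ size t ≤ n := by
  simp [treesUpTo, mem_treesOfSize]


lemma overConv_leaf (f g : PBT → R) : overConv f g leaf = f leaf * g leaf := by
  simp [overConv, overFactors]

lemma overConv_node (f g : PBT → R) (l r : PBT) :
    overConv f g (node l r) = f (node l r) * g leaf + overConv f (fun v => g (node v r)) l := by
  simp [overConv, overFactors, Function.comp_def]

lemma underConv_leaf (f g : PBT → R) : underConv f g leaf = f leaf * g leaf := by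
  simp [underConv, underFactors]

lemma underConv_node (f g : PBT → R) (l r : PBT) :
    underConv f g (node l r) = f leaf * g (node l r) + underConv (fun u => f (node l u)) g r := by
  simp [underConv, underFactors, Function.comp_def]

lemma overConv_node_of_leaf_eq_zero {g : PBT → R} (hg : g leaf = 0) (f : PBT → R) (l r : PBT) :
    overConv f g (node l r) = overConv f (fun v => g (node v r)) l := by
  rw [overConv_node, hg, mul_zero, zero_add]

lemma underConv_node_of_leaf_eq_zero {f : PBT → R} (hf : f leaf = 0) (g : PBT → R) (l r : PBT) :
    underConv f g (node l r) = underConv (fun u => f (node l u)) g r := by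
  rw [underConv_node, hf, zero_mul, zero_add]

lemma overConv_add_right (f g g' : PBT → R) (w : PBT) :
    overConv f (fun v => g v + g' v) w = overConv f g w + overConv f g' w := by
  simp [overConv, mul_add, List.sum_map_add]

lemma overConv_mul_const_right (f g : PBT → R) (c : R) (w : PBT) :
    overConv f (fun v => g v * c) w = overConv f g w * c := by
  simp [overConv, ← mul_assoc, List.sum_map_mul_right]

lemma underConv_add_left (f f' g : PBT → R) (w : PBT) :
    underConv (fun u => f u + f' u) g w = underConv f g w + underConv f' g w := by
  simp [underConv, add_mul, List.sum_map_add]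

lemma underConv_const_mul_left (c : R) (f g : PBT → R) (w : PBT) :
    underConv (fun u => c * f u) g w = c * underConv f g w := by
  simp [underConv, mul_assoc, List.sum_map_mul_left]

lemma overConv_unitSer (f : PBT → R) : overConv f unitSer = f := by
  funext w
  cases w with
  | leaf => simp [overConv_leaf, unitSer]
  | node l r => rw [overConv_node]; simp [unitSer, overConv]

lemma unitSer_underConv (g : PBT → R) : underConv unitSer g = g := by
  funext w
  cases w with
  | leaf => simp [underConv_leaf, unitSer]
  | node l r => rw [underConv_node]; simp [unitSer, underConv]

lemma overConv_assoc (f g h : PBT → R) :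
    overConv (overConv f g) h = overConv f (overConv g h) := by
  funext w
  induction w generalizing h with
  | leaf => simp [overConv_leaf, mul_assoc]
  | node l r ihl _ =>
    have hnode : (fun v => overConv g h (node v r))
        = fun v => g (node v r) * h leaf + overConv g (fun x => h (node x r)) v := by
      funext v; rw [overConv_node]
    rw [overConv_node, overConv_node, overConv_node, overConv_leaf, hnode, overConv_add_right,
      overConv_mul_const_right, ihl]
    ring

lemma underConv_assoc (f g h : PBT → R) :
    underConv (underConv f g) h = underConv f (underConv g h) := by
  funext w
  induction w generalizing f with
  | leaf => simp [underConv_leaf, mul_assoc]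
  | node l r _ ihr =>
    have hnode : (fun u => underConv f g (node l u))
        = fun u => f leaf * g (node l u) + underConv (fun x => f (node l x)) g u := by
      funext u; rw [underConv_node]
    rw [underConv_node, underConv_node, underConv_node, underConv_leaf, hnode,
      underConv_add_left, underConv_const_mul_left, ihr]
    ring

lemma underConv_overConv_comm (f h : PBT → R) (G : PBT → PBT → R) (l r : PBT) :
    underConv (fun u => overConv f (fun v => G v u) l) h r
      = overConv f (fun v => underConv (G v) h r) l := by
  simp only [overConv, underConv, ← List.sum_map_mul_right, ← List.sum_map_mul_left, mul_assoc]
  have := Multiset.sum_map_sum_map (underFactors r : Multiset (PBT × PBT))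
    (overFactors l : Multiset (PBT × PBT)) (f := fun q p => f p.1 * (G p.2 q.1 * h q.2))
  simpa using this

lemma underConv_overConv_assoc {g : PBT → R} (hg : g leaf = 0) (f h : PBT → R) :
    underConv (overConv f g) h = overConv f (underConv g h) := by
  funext w
  cases w with
  | leaf => simp [underConv_leaf, overConv_leaf, hg]
  | node l r =>
    rw [underConv_node_of_leaf_eq_zero (by simp [overConv_leaf, hg]),
      overConv_node_of_leaf_eq_zero (by simp [underConv_leaf, hg])]
    simp only [overConv_node_of_leaf_eq_zero hg, underConv_node_of_leaf_eq_zero hg]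
    exact underConv_overConv_comm f h (fun v u => g (node v u)) l r

lemma treePow_leaf (B : PBT → R) : treePow B leaf = unitSer := rfl

lemma treePow_node (B : PBT → R) (l r : PBT) :
    treePow B (node l r) = underConv (overConv (treePow B l) B) (treePow B r) := rfl

lemma treePow_under (B : PBT → R) (u v : PBT) :
    treePow B (under u v) = underConv (treePow B u) (treePow B v) := by
  induction u with
  | leaf => rw [under, treePow_leaf, unitSer_underConv]
  | node l r _ ihr => rw [under, treePow_node, ihr, treePow_node, underConv_assoc]

lemma treePow_over {B : PBT → R} (hB : B leaf = 0) (u v : PBT) :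
    treePow B (over' u v) = overConv (treePow B u) (treePow B v) := by
  induction v with
  | leaf => rw [over', treePow_leaf, overConv_unitSer]
  | node l r ihl _ =>
    rw [over', treePow_node, ihl, treePow_node, overConv_assoc,
      underConv_overConv_assoc (by rw [overConv_leaf, hB, mul_zero])]

structure Factorization where
  op : PBT → PBT → PBT
  factors : PBT → List (PBT × PBT)
  mem_factors : ∀ {t : PBT} {p : PBT × PBT}, p ∈ factors t ↔ op p.1 p.2 = t
  nodup_factors : ∀ t, (factors t).Nodup
  size_op : ∀ s t, size (op s t) = size s + size t

def overFactorization : Factorization :=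
  ⟨over', overFactors, mem_overFactors, nodup_overFactors, size_over⟩

def underFactorization : Factorization :=
  ⟨under, underFactors, mem_underFactors, nodup_underFactors, size_under⟩

def VanishesBelow (f : PBT → R) (n : ℕ) : Prop := ∀ w, size w < n → f w = 0

namespace Factorization

variable (F : Factorization)

def conv (f g : PBT → R) (w : PBT) : R := ((F.factors w).map fun p => f p.1 * g p.2).sum

lemma conv_vanishesBelow {f g : PBT → R} {m k : ℕ} (hf : VanishesBelow f m)
    (hg : VanishesBelow g k) : VanishesBelow (F.conv f g) (m + k) := by
  intro w hw
  refine List.sum_eq_zero fun x hx => ?_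
  obtain ⟨p, hp, rfl⟩ := List.mem_map.1 hx
  have hsize := F.size_op p.1 p.2
  rw [F.mem_factors.1 hp] at hsize
  by_cases h : size p.1 < m
  · rw [hf _ h, zero_mul]
  · rw [hg _ (by omega), mul_zero]

lemma conv_eq_sum_treesUpTo (f g : PBT → R) {n : ℕ} {w : PBT} (hw : size w ≤ n) :
    F.conv f g w = ∑ p ∈ treesUpTo n ×ˢ treesUpTo n with F.op p.1 p.2 = w, f p.1 * g p.2 := by
  rw [conv, ← List.sum_toFinset _ (F.nodup_factors w)]
  congr 1
  ext p
  have := F.size_op p.1 p.2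
  simp only [List.mem_toFinset, F.mem_factors, Finset.mem_filter, Finset.mem_product,
    mem_treesUpTo]
  constructor
  · rintro rfl
    exact ⟨⟨by omega, by omega⟩, rfl⟩
  · exact And.right

end Factorization

lemma treePow_vanishesBelow {B : PBT → R} (hB : B leaf = 0) (t : PBT) :
    VanishesBelow (treePow B t) (size t) := by
  induction t with
  | leaf => intro w hw; exact absurd hw (Nat.not_lt_zero _)
  | node l r ihl ihr =>
    have hB1 : VanishesBelow B 1 := fun w hw => by rw [size_eq_zero.1 (Nat.lt_one_iff.1 hw), hB]
    rw [treePow_node, show size (node l r) = size l + 1 + size r by simp [size]; ring]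
    exact underFactorization.conv_vanishesBelow (overFactorization.conv_vanishesBelow ihl hB1) ihr

lemma comp_eq_sum_treesUpTo (A : PBT → R) {B : PBT → R} (hB : B leaf = 0) {n : ℕ} {w : PBT}
    (hw : size w ≤ n) : comp A B w = ∑ t ∈ treesUpTo n, A t * treePow B t w := by
  have hcomp : comp A B w = ∑ t ∈ treesUpTo (size w), A t * treePow B t w :=
    (List.sum_toFinset _ (nodup_flatMap_treesOfSize _)).symm
  rw [hcomp]
  refine Finset.sum_subset (fun t ht => mem_treesUpTo.2 ((mem_treesUpTo.1 ht).trans hw))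
    fun t _ ht => ?_
  rw [treePow_vanishesBelow hB t w (not_le.1 (mt mem_treesUpTo.2 ht)), mul_zero]

namespace Factorization

variable (F : Factorization)

lemma comp_conv_eq_sum (A D : PBT → R) {C : PBT → R} (hC : C leaf = 0) (w : PBT) :
    comp (F.conv A D) C w = ∑ p ∈ treesUpTo (size w) ×ˢ treesUpTo (size w),
      A p.1 * D p.2 * treePow C (F.op p.1 p.2) w := by
  set T := treesUpTo (size w)
  calc comp (F.conv A D) C w
      = ∑ t ∈ T, ∑ p ∈ T ×ˢ T with F.op p.1 p.2 = t,
          A p.1 * D p.2 * treePow C (F.op p.1 p.2) w := by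
        rw [comp_eq_sum_treesUpTo _ hC le_rfl]
        refine Finset.sum_congr rfl fun t ht => ?_
        rw [F.conv_eq_sum_treesUpTo _ _ (mem_treesUpTo.1 ht), Finset.sum_mul]
        exact Finset.sum_congr rfl fun p hp => by rw [(Finset.mem_filter.1 hp).2]
    _ = ∑ p ∈ T ×ˢ T with F.op p.1 p.2 ∈ T, A p.1 * D p.2 * treePow C (F.op p.1 p.2) w :=
        Finset.sum_fiberwise_eq_sum_filter ..
    _ = _ := by
        refine Finset.sum_filter_of_ne fun p _ hne => mem_treesUpTo.2 (not_lt.1 fun hlt => ?_)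
        exact hne (by rw [treePow_vanishesBelow hC _ w hlt, mul_zero])

lemma conv_comp_eq_sum (A D : PBT → R) {C : PBT → R} (hC : C leaf = 0)
    (hpow : ∀ s t, treePow C (F.op s t) = F.conv (treePow C s) (treePow C t)) (w : PBT) :
    F.conv (comp A C) (comp D C) w = ∑ p ∈ treesUpTo (size w) ×ˢ treesUpTo (size w),
      A p.1 * D p.2 * treePow C (F.op p.1 p.2) w := by
  set T := treesUpTo (size w)
  calc F.conv (comp A C) (comp D C) w
      = ∑ q ∈ T ×ˢ T with F.op q.1 q.2 = w, ∑ p ∈ T ×ˢ T,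
          A p.1 * treePow C p.1 q.1 * (D p.2 * treePow C p.2 q.2) := by
        rw [F.conv_eq_sum_treesUpTo _ _ le_rfl]
        refine Finset.sum_congr rfl fun q hq => ?_
        have hsize := F.size_op q.1 q.2
        rw [(Finset.mem_filter.1 hq).2] at hsize
        rw [comp_eq_sum_treesUpTo _ hC (by omega : size q.1 ≤ size w),
          comp_eq_sum_treesUpTo _ hC (by omega : size q.2 ≤ size w), Finset.sum_mul_sum,
          Finset.sum_product]
    _ = ∑ p ∈ T ×ˢ T, A p.1 * D p.2 * F.conv (treePow C p.1) (treePow C p.2) w := by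
        rw [Finset.sum_comm]
        refine Finset.sum_congr rfl fun p _ => ?_
        rw [F.conv_eq_sum_treesUpTo _ _ le_rfl, Finset.mul_sum]
        exact Finset.sum_congr rfl fun q _ => by ring
    _ = _ := by simp only [hpow]

theorem comp_conv (A D : PBT → R) {C : PBT → R} (hC : C leaf = 0)
    (hpow : ∀ s t, treePow C (F.op s t) = F.conv (treePow C s) (treePow C t)) :
    comp (F.conv A D) C = F.conv (comp A C) (comp D C) := by
  funext w
  rw [F.comp_conv_eq_sum A D hC, F.conv_comp_eq_sum A D hC hpow]

end Factorization

end PBT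

open PBT in
theorem comp_right_distrib_general (R : Type*) [CommRing R] (A D C : PBT → R)
    (hC0 : C PBT.leaf = 0) :
    comp (overConv A D) C = overConv (comp A C) (comp D C) ∧
    comp (underConv A D) C = underConv (comp A C) (comp D C) :=
  ⟨overFactorization.comp_conv A D hC0 (treePow_over hC0),
    underFactorization.comp_conv A D hC0 (treePow_under C)⟩

open PBT in
/-- composition of tree-expanded series distributes on the right
over the over and under convolution products. -/
theorem comp_right_distrib (R : Type*) [CommRing R] (A D C : PBT → R)
    (hA0 : A PBT.leaf = 0) (hD0 : D PBT.leaf = 0) (hC0 : C PBT.leaf = 0) :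
    comp (overConv A D) C = overConv (comp A C) (comp D C) ∧
    comp (underConv A D) C = underConv (comp A C) (comp D C) :=
  comp_right_distrib_general R A D C hC0
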